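/- arXiv:1701.07253 — 12 statements merged into one kernel-verified Lean document; each statement's English description precedes it below -/
import Mathlib

section
/- Any conservative operation F : X² → X has at most one isolated point, and any isolated point lies on the diagonal. -/
theorem stmt_2 {X : Type*} (F : X → X → X)
    (hcons : ∀ x y : X, F x y = x ∨ F x y = y) :
    (∀ x y : X, (∀ u v : X, F u v = F x y → (u, v) = (x, y)) → x = y) ∧
      (∀ x y x' y' : X, (∀ u v : X, F u v = F x y → (u, v) = (x, y)) →
        (∀ u v : X, F u v = F x' y' → (u, v) = (x', y')) → (x, y) = (x', y')) := by
  have hdiag : ∀ x : X, F x x = x := fun x => (hcons x x).elim id id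
  have hiso : ∀ x y : X, (∀ u v : X, F u v = F x y → (u, v) = (x, y)) → x = y := by
    intro x y h
    rcases hcons x y with hx | hy
    · have := h x x (by rw [hdiag, hx])
      exact (Prod.mk.injEq .. ▸ this).2
    · have := h y y (by rw [hdiag, hy])
      exact ((Prod.mk.injEq .. ▸ this).1).symm
  refine ⟨hiso, fun x y x' y' h h' => ?_⟩
  have e1 := hiso x y h
  have e2 := hiso x' y' h'
  subst e1; subst e2
  rcases hcons x x' with hx | hx'
  · have := h x x' (by rw [hx, hdiag])
    have := (Prod.mk.injEq .. ▸ this).2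
    simp [this]
  · have := h' x x' (by rw [hx', hdiag])
    have := (Prod.mk.injEq .. ▸ this).1
    simp [this]
end

section
/- Let F : X² → X be a conservative operation and e ∈ X. Then e is a neutral element of F if and only if the point (e,e) is isolated for F. -/
theorem stmt_3 {X : Type*} (F : X → X → X)
    (hcons : ∀ x y : X, F x y = x ∨ F x y = y) (e : X) :
    (∀ x : X, F x e = x ∧ F e x = x) ↔
      (∀ u v : X, F u v = F e e → (u, v) = (e, e)) := by
  constructor
  · intro hne u v huv
    have hee : F e e = e := (hne e).1
    rw [hee] at huv
    rcases hcons u v with h | h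
    · have hu : u = e := by rw [h] at huv; exact huv
      have hv : v = e := by
        have h2 := (hne v).2
        rw [hu] at h; rw [h2] at h; exact h
      simp [hu, hv]
    · have hv : v = e := by rw [h] at huv; exact huv
      have hu : u = e := by
        have h2 := (hne u).1
        rw [hv] at h; rw [h2] at h; exact h
      simp [hu, hv]
  · intro hiso x
    have hee : F e e = e := (hcons e e).elim id id
    constructor
    · rcases hcons x e with h | h
      · exact h
      · have := hiso x e (by rw [h, hee])
        simp at this
        rw [this] at h ⊢; exact h
    · rcases hcons e x with h | h
      · have := hiso e x (by rw [h, hee])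
        simp at this
        rw [this] at h ⊢; exact h
      · exact h
end

section
/- If F : Lₙ² → Lₙ is conservative, symmetric, and nondecreasing, where Lₙ = {1,…,n} is a finite chain, then F has a neutral element. -/
theorem stmt_7 {n : ℕ} (hn : 1 ≤ n) (F : Fin n → Fin n → Fin n)
    (hcons : ∀ x y, F x y = x ∨ F x y = y)
    (hsymm : ∀ x y, F x y = F y x)
    (hmono : ∀ x x' y y', x ≤ x' → y ≤ y' → F x y ≤ F x' y') :
    ∃ e : Fin n, ∀ x, F x e = x ∧ F e x = x := by
  classical
  -- key lemma: local neutrality at neighbors implies full neutrality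
  have key : ∀ e : Fin n,
      (∀ (h : e.1 + 1 < n), F e ⟨e.1 + 1, h⟩ = ⟨e.1 + 1, h⟩) →
      (∀ (_ : 0 < e.1), F e ⟨e.1 - 1, Nat.lt_of_le_of_lt (Nat.sub_le _ _) e.2⟩
        = ⟨e.1 - 1, Nat.lt_of_le_of_lt (Nat.sub_le _ _) e.2⟩) →
      ∀ x, F e x = x := by
    intro e h1 h2 x
    rcases lt_trichotomy x e with hlt | heq | hgt
    · -- x < e
      have he0 : 0 < e.1 := Nat.lt_of_le_of_lt (Nat.zero_le _) hlt
      have hle : x ≤ (⟨e.1 - 1, Nat.lt_of_le_of_lt (Nat.sub_le _ _) e.2⟩ : Fin n) := by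
        have : x.1 < e.1 := hlt
        rw [Fin.le_def]
        show x.1 ≤ e.1 - 1
        omega
      have hmon := hmono e e x ⟨e.1 - 1, Nat.lt_of_le_of_lt (Nat.sub_le _ _) e.2⟩
        le_rfl hle
      rw [h2 he0] at hmon
      rcases hcons e x with hc | hc
      · exfalso
        rw [hc] at hmon
        have : e.1 ≤ e.1 - 1 := hmon
        omega
      · exact hc
    · rw [heq]
      rcases hcons e e with hc | hc <;> exact hc
    · -- e < x
      have hsn : e.1 + 1 < n := by
        have h1' : e.1 < x.1 := hgt
        have := x.2
        omega
      have hle : (⟨e.1 + 1, hsn⟩ : Fin n) ≤ x := by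
        have : e.1 < x.1 := hgt
        rw [Fin.le_def]
        show e.1 + 1 ≤ x.1
        omega
      have hmon := hmono e e ⟨e.1 + 1, hsn⟩ x le_rfl hle
      rw [h1 hsn] at hmon
      rcases hcons e x with hc | hc
      · exfalso
        rw [hc] at hmon
        have : e.1 + 1 ≤ e.1 := hmon
        omega
      · exact hc
  by_cases hc : ∃ k : ℕ, ∃ h : k + 1 < n,
      F ⟨k, Nat.lt_of_succ_lt h⟩ ⟨k + 1, h⟩ = ⟨k + 1, h⟩
  · -- take the least such k; it serves as the neutral element
    set e0 := Nat.find hc with he0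
    obtain ⟨hsn, hspec⟩ := Nat.find_spec hc
    have hen : e0 < n := Nat.lt_of_succ_lt hsn
    refine ⟨⟨e0, hen⟩, ?_⟩
    have hfull : ∀ x, F ⟨e0, hen⟩ x = x := by
      apply key
      · intro h
        exact hspec
      · intro hpos
        have hpos' : 0 < e0 := hpos
        have hmin : ¬ ∃ h : (e0 - 1) + 1 < n,
            F ⟨e0 - 1, Nat.lt_of_succ_lt h⟩ ⟨(e0 - 1) + 1, h⟩ = ⟨(e0 - 1) + 1, h⟩ :=
          Nat.find_min hc (by omega)
        push_neg at hmin
        have hsn' : (e0 - 1) + 1 < n := by omega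
        have hne := hmin hsn'
        have heq1 : (⟨(e0 - 1) + 1, hsn'⟩ : Fin n) = ⟨e0, hen⟩ := by
          rw [Fin.mk.injEq]; omega
        rw [heq1] at hne
        rcases hcons (⟨e0 - 1, Nat.lt_of_succ_lt hsn'⟩ : Fin n) ⟨e0, hen⟩ with h' | h'
        · rw [hsymm]
          exact h'
        · exact absurd h' hne
    intro x
    exact ⟨by rw [hsymm]; exact hfull x, hfull x⟩
  · -- no ascending pair: the top element is neutral
    push_neg at hc
    have hen : n - 1 < n := by omega
    refine ⟨⟨n - 1, hen⟩, ?_⟩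
    have hfull : ∀ x, F ⟨n - 1, hen⟩ x = x := by
      apply key
      · intro h
        exfalso; simp at h; omega
      · intro hpos
        have hpos' : 0 < n - 1 := hpos
        have hsn' : (n - 2) + 1 < n := by omega
        have hne := hc (n - 2) hsn'
        have heq1 : (⟨(n - 2) + 1, hsn'⟩ : Fin n) = ⟨n - 1, hen⟩ := by
          rw [Fin.mk.injEq]; omega
        rw [heq1] at hne
        have heq2 : (⟨(n - 1 : ℕ) - 1, Nat.lt_of_le_of_lt (Nat.sub_le _ _) hen⟩ : Fin n)
            = ⟨n - 2, Nat.lt_of_succ_lt hsn'⟩ := by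
          rw [Fin.mk.injEq]; omega
        rw [heq2]
        rcases hcons (⟨n - 2, Nat.lt_of_succ_lt hsn'⟩ : Fin n) ⟨n - 1, hen⟩ with h' | h'
        · rw [hsymm]; exact h'
        · exact absurd h' hne
    intro x
    exact ⟨by rw [hsymm]; exact hfull x, hfull x⟩
end

section
/- If F : Lₙ² → Lₙ is conservative, symmetric, and nondecreasing, where Lₙ = {1,…,n} is a finite chain, then F is associative. -/
theorem stmt_8 {n : ℕ} (F : Fin n → Fin n → Fin n)
    (hcons : ∀ x y, F x y = x ∨ F x y = y)
    (hsymm : ∀ x y, F x y = F y x)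
    (hmono : ∀ x x' y y', x ≤ x' → y ≤ y' → F x y ≤ F x' y') :
    ∀ x y z, F (F x y) z = F x (F y z) := by
  have L1 : ∀ x y z : Fin n, x ≤ y → y ≤ z → F x z = x → F x y = x := by
    intro x y z hxy hyz h
    rcases hcons x y with h2 | h2
    · exact h2
    · have h1 : F x y ≤ x := by
        have := hmono x x y z le_rfl hyz
        rwa [h] at this
      rw [h2] at h1 ⊢
      exact le_antisymm h1 hxy
  have L2 : ∀ x y z : Fin n, x ≤ y → y ≤ z → F x z = z → F y z = z := by
    intro x y z hxy hyz h
    rcases hcons y z with h2 | h2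
    · have h1 : z ≤ F y z := by
        have := hmono x y z z hxy le_rfl
        rw [h] at this
        exact this
      rw [h2] at h1 ⊢
      exact le_antisymm hyz h1
    · exact h2
  -- sorted case x ≤ y ≤ z
  have K1 : ∀ x y z : Fin n, x ≤ y → y ≤ z → F (F x y) z = F x (F y z) := by
    intro x y z hxy hyz
    rcases hcons x y with hxy' | hxy' <;> rcases hcons y z with hyz' | hyz' <;>
      simp only [hxy', hyz']
    · -- F x y = x, F y z = y : goal F x z = x
      rcases hcons x z with h | h
      · exact h
      · have e : y = z := hyz'.symm.trans (L2 x y z hxy hyz h)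
        rw [← e]
        exact hxy'
    · -- F x y = y, F y z = z : goal z = F x z
      rcases hcons x z with h | h
      · have e : y = x := hxy'.symm.trans (L1 x y z hxy hyz h)
        rw [← e]
        exact hyz'.symm
      · exact h.symm
  -- case y ≤ x ≤ z
  have K2 : ∀ x y z : Fin n, y ≤ x → x ≤ z → F (F x y) z = F x (F y z) := by
    intro x y z hyx hxz
    rcases hcons x y with hxy' | hxy' <;> rcases hcons y z with hyz' | hyz' <;>
      simp only [hxy', hyz']
    · -- F x y = x, F y z = y : goal F x z = x
      have e : x = y := hxy'.symm.trans ((hsymm x y).trans (L1 y x z hyx hxz hyz'))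
      rw [e]
      exact hyz'
    · -- F x y = y, F y z = z : goal z = F x z
      exact (L2 y x z hyx hxz hyz').symm
  -- case x ≤ y, z ≤ y  (y max)
  have K3 : ∀ x y z : Fin n, x ≤ y → z ≤ y → F (F x y) z = F x (F y z) := by
    intro x y z hxy hzy
    rcases hcons x y with hxy' | hxy' <;> rcases hcons y z with hyz' | hyz' <;>
      simp only [hxy', hyz']
    · -- F x y = x, F y z = y : goal F x z = x
      rcases le_total x z with h | h
      · exact L1 x z y h hzy hxy'
      · have e : x = y := hxy'.symm.trans (L2 z x y h hxy ((hsymm z y).trans hyz'))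
        rw [e]
        exact hyz'
    · -- F x y = y, F y z = z : goal z = F x z
      rcases le_total x z with h | h
      · have e : z = y := ((hsymm z y).trans hyz').symm.trans (L2 x z y h hzy hxy')
        rw [e]
        exact hxy'.symm
      · exact ((hsymm x z).trans (L1 z x y h hxy ((hsymm z y).trans hyz'))).symm
  -- reversal
  have rev : ∀ x y z : Fin n, F (F z y) x = F z (F y x) → F (F x y) z = F x (F y z) := by
    intro x y z h
    rw [hsymm (F x y) z, hsymm x y, hsymm x (F y z), hsymm y z]
    exact h.symm
  intro x y z
  rcases le_total x y with h1 | h1 <;> rcases le_total y z with h2 | h2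
  · exact K1 x y z h1 h2
  · exact K3 x y z h1 h2
  · rcases le_total x z with h3 | h3
    · exact K2 x y z h1 h3
    · exact rev x y z (K2 z y x h2 h3)
  · exact rev x y z (K1 z y x h2 h1)
end

section
/- An operation F : Lₙ² → Lₙ is conservative, symmetric, and nondecreasing if and only if it is an idempotent discrete uninorm, i.e., idempotent, associative, symmetric, nondecreasing, and with a neutral element. -/
theorem stmt_9 {n : ℕ} (hn : 1 ≤ n) (F : Fin n → Fin n → Fin n) :
    ((∀ x y, F x y = x ∨ F x y = y) ∧ (∀ x y, F x y = F y x) ∧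
      (∀ x x' y y', x ≤ x' → y ≤ y' → F x y ≤ F x' y')) ↔
    ((∀ x, F x x = x) ∧ (∀ x y z, F (F x y) z = F x (F y z)) ∧
      (∀ x y, F x y = F y x) ∧
      (∀ x x' y y', x ≤ x' → y ≤ y' → F x y ≤ F x' y') ∧
      (∃ e, ∀ x, F x e = x ∧ F e x = x)) := by
  constructor
  · rintro ⟨hc, hs, hm⟩
    have idem : ∀ x, F x x = x := fun x => by rcases hc x x with h | h <;> exact h
    -- transitivity of the absorption relation
    have htr : ∀ x y z : Fin n, F x y = y → F y z = z → F x z = z := by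
      intro x y z hxy hyz
      rcases hc x z with h | h
      · -- F x z = x ; show x = z
        have hxz : x = z := by
          rcases le_total x z with h1 | h1
          · rcases le_total y z with h2 | h2
            · rcases le_total x y with h3 | h3
              · -- x ≤ y ≤ z
                have m1 : F x y ≤ F x z := hm x x y z le_rfl h2
                rw [hxy, h] at m1
                have hxyeq : x = y := le_antisymm h3 m1
                rw [← hxyeq] at hyz
                exact h.symm.trans hyz
              · -- y ≤ x ≤ z
                have m1 : F y z ≤ F x z := hm y x z z h3 le_rfl
                rw [hyz, h] at m1
                exact le_antisymm h1 m1
            · -- x ≤ z ≤ y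
              have m1 : F x y ≤ F z y := hm x z y y h1 le_rfl
              rw [hxy, hs z y, hyz] at m1
              have hyzeq : y = z := le_antisymm m1 h2
              rw [hyzeq] at hxy
              exact h.symm.trans hxy
          · rcases le_total y z with h2 | h2
            · -- y ≤ z ≤ x
              have m1 : F y z ≤ F y x := hm y y z x le_rfl h1
              rw [hyz, hs y x, hxy] at m1
              have hzy : z = y := le_antisymm m1 h2
              rw [← hzy] at hxy
              exact h.symm.trans hxy
            · rcases le_total x y with h3 | h3
              · -- z ≤ x, x ≤ y : use F x z ≤ F y z
                have m2 : F x z ≤ F y z := hm x y z z h3 le_rfl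
                rw [h, hyz] at m2
                exact le_antisymm m2 h1
              · -- z ≤ y ≤ x
                have m1 : F z x ≤ F y x := hm z y x x h2 le_rfl
                rw [hs z x, h, hs y x, hxy] at m1
                have hxyeq : x = y := le_antisymm m1 h3
                rw [← hxyeq] at hyz
                exact h.symm.trans hyz
        rw [hxz]
        exact idem z
      · exact h
    have assoc : ∀ x y z, F (F x y) z = F x (F y z) := by
      intro x y z
      rcases hc x y with h1 | h1 <;> rcases hc y z with h2 | h2
      · -- F x y = x, F y z = y : goal reduces to F x z = x
        have e1 : F z y = y := (hs z y).trans h2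
        have e2 : F y x = x := (hs y x).trans h1
        have e3 : F x z = x := (hs x z).trans (htr z y x e1 e2)
        rw [h1, h2, h1, e3]
      · rw [h1, h2]
      · rw [h1, h2, h1]
      · have h3 := htr x y z h1 h2
        rw [h1, h2, h3]
    -- neutral element: minimum of absorption order, via Finset induction
    have key : ∀ s : Finset (Fin n), s.Nonempty → ∃ e ∈ s, ∀ x ∈ s, F e x = x := by
      intro s
      induction s using Finset.induction_on with
      | empty => rintro ⟨x, hx⟩; simp at hx
      | @insert a s ha ih =>
        intro _
        by_cases hsne : s.Nonempty
        · obtain ⟨e, he, hee⟩ := ih hsne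
          rcases hc e a with h | h
          · -- F e a = e, so a is below e in absorption order: take a
            refine ⟨a, Finset.mem_insert_self a s, ?_⟩
            intro x hx
            rcases Finset.mem_insert.mp hx with rfl | hx
            · exact idem x
            · have hae : F a e = e := by rw [hs]; exact h
              exact htr a e x hae (hee x hx)
          · refine ⟨e, Finset.mem_insert_of_mem he, ?_⟩
            intro x hx
            rcases Finset.mem_insert.mp hx with rfl | hx
            · exact h
            · exact hee x hx
        · refine ⟨a, Finset.mem_insert_self a s, ?_⟩
          intro x hx
          rcases Finset.mem_insert.mp hx with rfl | hx
          · exact idem x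
          · exact absurd ⟨x, hx⟩ hsne
    have : (Finset.univ : Finset (Fin n)).Nonempty := ⟨⟨0, hn⟩, Finset.mem_univ _⟩
    obtain ⟨e, -, hee⟩ := key Finset.univ this
    exact ⟨idem, assoc, hs, hm, e, fun x =>
      ⟨by rw [hs]; exact hee x (Finset.mem_univ x), hee x (Finset.mem_univ x)⟩⟩
  · rintro ⟨hid, ha, hs, hm, e, he⟩
    refine ⟨?_, hs, hm⟩
    have key : ∀ x y : Fin n, x ≤ y → F x y = x ∨ F x y = y := by
      intro x y hxy
      have hxz : x ≤ F x y := by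
        calc x = F x x := (hid x).symm
          _ ≤ F x y := hm x x x y le_rfl hxy
      have hzy : F x y ≤ y := by
        calc F x y ≤ F y y := hm x y y y hxy le_rfl
          _ = y := hid y
      have h1 : F x (F x y) = F x y := by rw [← ha, hid]
      have h2 : F (F x y) y = F x y := by rw [ha, hid]
      rcases le_total (F x y) e with h | h
      · left
        have hle : F x (F x y) ≤ F x e := hm x x (F x y) e le_rfl h
        rw [h1, (he x).1] at hle
        exact le_antisymm hle hxz
      · right
        have hle : F e y ≤ F (F x y) y := hm e (F x y) y y h le_rfl
        rw [h2, (he y).2] at hle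
        exact le_antisymm hzy hle
    intro x y
    rcases le_total x y with h | h
    · exact key x y h
    · rcases key y x h with h' | h'
      · right; rw [hs]; exact h'
      · left; rw [hs]; exact h'
end

section
/- Let F : Lₙ² → Lₙ be associative, symmetric, nondecreasing, and have a neutral element. Then F is idempotent if and only if F is conservative. -/
theorem stmt_10 {n : ℕ} (F : Fin n → Fin n → Fin n)
    (hassoc : ∀ x y z, F (F x y) z = F x (F y z))
    (hsymm : ∀ x y, F x y = F y x)
    (hmono : ∀ x x' y y', x ≤ x' → y ≤ y' → F x y ≤ F x' y')
    (hne : ∃ e, ∀ x, F x e = x ∧ F e x = x) :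
    (∀ x, F x x = x) ↔ (∀ x y, F x y = x ∨ F x y = y) := by
  obtain ⟨e, he⟩ := hne
  constructor
  · intro hid
    -- mixed case lemma: x ≤ e ≤ y → F x y = x ∨ F x y = y
    have mixed : ∀ x y : Fin n, x ≤ e → e ≤ y → F x y = x ∨ F x y = y := by
      intro x y hx hy
      set a := F x y with ha
      have hxa : x ≤ a := by
        have := hmono x x e y le_rfl hy
        rwa [(he x).1] at this
      have hay : a ≤ y := by
        have := hmono x e y y hx le_rfl
        rwa [(he y).2] at this
      rcases le_total a e with hae | hea
      · left
        have h1 : F x a = a := by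
          rw [ha, ← hassoc, hid x]
        have h2 : F x a ≤ x := by
          have := hmono x x a e le_rfl hae
          rwa [(he x).1] at this
        have h3 : x ≤ F x a := by
          have := hmono x x x a le_rfl hxa
          rwa [hid x] at this
        rw [← h1]; exact le_antisymm h2 h3
      · right
        have h1 : F a y = a := by
          rw [ha, hassoc, hid y]
        have h2 : F a y ≤ y := by
          have := hmono a y y y hay le_rfl
          rwa [hid y] at this
        have h3 : y ≤ F a y := by
          have := hmono e a y y hea le_rfl
          rwa [(he y).2] at this
        rw [← h1]; exact le_antisymm h2 h3
    intro x y
    rcases le_total x e with hx | hx <;> rcases le_total y e with hy | hy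
    · -- both ≤ e : F x y = min
      have h1 : F x y ≤ x := by
        have := hmono x x y e le_rfl hy
        rwa [(he x).1] at this
      have h2 : F x y ≤ y := by
        have := hmono x e y y hx le_rfl
        rwa [(he y).2] at this
      rcases le_total x y with hxy | hxy
      · left
        have := hmono x x x y le_rfl hxy
        rw [hid x] at this
        exact le_antisymm h1 this
      · right
        have := hmono y x y y hxy le_rfl
        rw [hid y] at this
        exact le_antisymm h2 this
    · exact mixed x y hx hy
    · rcases mixed y x hy hx with h | h
      · right; rw [hsymm]; exact h
      · left; rw [hsymm]; exact h
    · -- both ≥ e : F x y = max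
      have h1 : x ≤ F x y := by
        have := hmono x x e y le_rfl hy
        rwa [(he x).1] at this
      have h2 : y ≤ F x y := by
        have := hmono e x y y hx le_rfl
        rwa [(he y).2] at this
      rcases le_total x y with hxy | hxy
      · right
        have := hmono x y y y hxy le_rfl
        rw [hid y] at this
        exact le_antisymm this h2
      · left
        have := hmono x x y x le_rfl hxy
        rw [hid x] at this
        exact le_antisymm this h1
  · intro h x
    rcases h x x with h | h <;> exact h
end

section
/- There are exactly 2^(n-1) idempotent discrete uninorms on the n-element chain Lₙ = {1,…,n}, i.e., exactly 2^(n-1) operations F : Lₙ² → Lₙ that are conservative, symmetric, and nondecreasing. -/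
/-!
For an idempotent uninorm `F` on a finite chain with least element `b` and greatest element `t`,
the value `F b t ∈ {b, t}` is absorbing by monotonicity. Deleting an absorbing endpoint leaves an
idempotent uninorm on the remaining chain, and conversely every idempotent uninorm on the chain
without one endpoint extends uniquely to one in which that endpoint is absorbing. So adding an
element to the chain doubles the number of idempotent uninorms.
-/

variable {α : Type*}

theorem Nat.card_subtype_ne [Finite α] (a : α) : Nat.card {x // x ≠ a} = Nat.card α - 1 := by
  have := Fintype.ofFinite α
  classical
  rw [Nat.card_eq_fintype_card, Nat.card_eq_fintype_card]
  simp

def IsConservative (F : α → α → α) : Prop :=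
  ∀ x y, F x y = x ∨ F x y = y

def IsIdempotentUninorm [Preorder α] (F : α → α → α) : Prop :=
  IsConservative F ∧ (∀ x y, F x y = F y x) ∧
    (∀ x x' y y', x ≤ x' → y ≤ y' → F x y ≤ F x' y')

def IsAbsorbing (F : α → α → α) (a : α) : Prop :=
  ∀ x, F a x = a

theorem isIdempotentUninorm_left_of_subsingleton [Preorder α] [Subsingleton α] :
    IsIdempotentUninorm (fun x _ : α => x) :=
  ⟨fun _ _ => .inl rfl, fun _ _ => Subsingleton.elim _ _, fun _ _ _ _ hx _ => hx⟩

def IsConservative.restrict {F : α → α → α} (hF : IsConservative F) (p : α → Prop) :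
    Subtype p → Subtype p → Subtype p :=
  fun x y => ⟨F x y, by rcases hF x y with h | h <;> rw [h]; exacts [x.2, y.2]⟩

def extendAbsorbing [DecidableEq α] (a : α) (G : {x // x ≠ a} → {x // x ≠ a} → {x // x ≠ a})
    (x y : α) : α :=
  if hx : x = a then a else if hy : y = a then a else G ⟨x, hx⟩ ⟨y, hy⟩

section extendAbsorbing

variable [DecidableEq α] {a x y : α} {G : {x // x ≠ a} → {x // x ≠ a} → {x // x ≠ a}}

theorem extendAbsorbing_of_eq_or (h : x = a ∨ y = a) : extendAbsorbing a G x y = a := by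
  rcases h with rfl | rfl <;> simp [extendAbsorbing]

theorem isAbsorbing_extendAbsorbing : IsAbsorbing (extendAbsorbing a G) a :=
  fun _ => extendAbsorbing_of_eq_or (.inl rfl)

theorem extendAbsorbing_of_ne (hx : x ≠ a) (hy : y ≠ a) :
    extendAbsorbing a G x y = G ⟨x, hx⟩ ⟨y, hy⟩ := by
  simp [extendAbsorbing, hx, hy]

end extendAbsorbing

section PartialOrder

variable [PartialOrder α]

namespace IsIdempotentUninorm

variable {F : α → α → α}

theorem restrict (hF : IsIdempotentUninorm F) (p : α → Prop) :
    IsIdempotentUninorm (hF.1.restrict p) :=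
  ⟨fun x y => (hF.1 x y).imp Subtype.ext Subtype.ext, fun x y => Subtype.ext (hF.2.1 x y),
    fun _ _ _ _ hx hy => hF.2.2 _ _ _ _ hx hy⟩

theorem extendAbsorbing [DecidableEq α] {a : α} {G : {x // x ≠ a} → {x // x ≠ a} → {x // x ≠ a}}
    (hG : IsIdempotentUninorm G) (ha : IsBot a ∨ IsTop a) :
    IsIdempotentUninorm (extendAbsorbing a G) := by
  refine ⟨fun x y => ?_, fun x y => ?_, fun x x' y y' hx hy => ?_⟩
  · by_cases h : x = a ∨ y = a
    · rw [extendAbsorbing_of_eq_or h]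
      exact h.imp Eq.symm Eq.symm
    · obtain ⟨hx, hy⟩ := not_or.mp h
      rw [extendAbsorbing_of_ne hx hy]
      exact (hG.1 _ _).imp (congrArg Subtype.val) (congrArg Subtype.val)
  · by_cases h : x = a ∨ y = a
    · rw [extendAbsorbing_of_eq_or h, extendAbsorbing_of_eq_or h.symm]
    · obtain ⟨hx, hy⟩ := not_or.mp h
      rw [extendAbsorbing_of_ne hx hy, extendAbsorbing_of_ne hy hx, hG.2.1]
  · by_cases h : x = a ∨ y = a
    · rcases ha with ha | ha
      · rw [extendAbsorbing_of_eq_or h]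
        exact ha _
      · rw [extendAbsorbing_of_eq_or (h.imp (fun h : x = a => le_antisymm (ha x') (h ▸ hx))
          (fun h : y = a => le_antisymm (ha y') (h ▸ hy)))]
        exact ha _
    by_cases h' : x' = a ∨ y' = a
    · rcases ha with ha | ha
      · exact absurd (h'.imp (fun h : x' = a => le_antisymm (h ▸ hx) (ha x))
          (fun h : y' = a => le_antisymm (h ▸ hy) (ha y))) h
      · rw [extendAbsorbing_of_eq_or h']
        exact ha _
    obtain ⟨hxa, hya⟩ := not_or.mp h
    obtain ⟨hxa', hya'⟩ := not_or.mp h'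
    rw [extendAbsorbing_of_ne hxa hya, extendAbsorbing_of_ne hxa' hya']
    exact hG.2.2 _ _ _ _ hx hy

theorem isAbsorbing_bot_or_top (hF : IsIdempotentUninorm F) {b t : α} (hb : IsBot b)
    (ht : IsTop t) : IsAbsorbing F b ∨ IsAbsorbing F t := by
  obtain ⟨hcons, hsymm, hmono⟩ := hF
  rcases hcons b t with h | h
  · exact .inl fun x => le_antisymm ((hmono b b x t le_rfl (ht x)).trans h.le) (hb _)
  · exact .inr fun x => le_antisymm (ht _)
      (h.symm.le.trans ((hmono b x t t (hb x) le_rfl).trans (hsymm x t).le))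

theorem not_isAbsorbing_of_isAbsorbing (hF : IsIdempotentUninorm F) {a b : α} (hab : a ≠ b)
    (ha : IsAbsorbing F a) : ¬IsAbsorbing F b :=
  fun hb => hab ((ha b).symm.trans ((hF.2.1 a b).trans (hb a)))

end IsIdempotentUninorm

def absorbingEquiv [DecidableEq α] (a : α) (ha : IsBot a ∨ IsTop a) :
    {F : α → α → α // IsIdempotentUninorm F ∧ IsAbsorbing F a} ≃
      {G : {x // x ≠ a} → {x // x ≠ a} → {x // x ≠ a} // IsIdempotentUninorm G} where
  toFun F := ⟨F.2.1.1.restrict _, F.2.1.restrict _⟩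
  invFun G := ⟨extendAbsorbing a G, G.2.extendAbsorbing ha, isAbsorbing_extendAbsorbing⟩
  left_inv := by
    rintro ⟨F, ⟨-, hsymm, -⟩, hFa⟩
    ext x y
    change extendAbsorbing a _ x y = F x y
    by_cases h : x = a ∨ y = a
    · rw [extendAbsorbing_of_eq_or h]
      rcases h with rfl | rfl
      · exact (hFa y).symm
      · exact (hsymm x _ ▸ hFa x).symm
    · obtain ⟨hx, hy⟩ := not_or.mp h
      rw [extendAbsorbing_of_ne hx hy]
      rfl
  right_inv G := by
    ext x y
    exact extendAbsorbing_of_ne x.2 y.2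

theorem card_isIdempotentUninorm_eq_add [Finite α] {b t : α} (hb : IsBot b) (ht : IsTop t)
    (hbt : b ≠ t) :
    Nat.card {F : α → α → α // IsIdempotentUninorm F} =
      Nat.card {G : {x // x ≠ b} → {x // x ≠ b} → {x // x ≠ b} // IsIdempotentUninorm G} +
        Nat.card {G : {x // x ≠ t} → {x // x ≠ t} → {x // x ≠ t} // IsIdempotentUninorm G} := by
  classical
  have hdisj : Disjoint (fun F => IsIdempotentUninorm F ∧ IsAbsorbing F b)
      (fun F => IsIdempotentUninorm F ∧ IsAbsorbing F t) := by
    exact disjoint_iff_inf_le.mpr fun F ⟨⟨hF, hFb⟩, _, hFt⟩ =>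
      hF.not_isAbsorbing_of_isAbsorbing hbt hFb hFt
  have hsplit : ∀ F : α → α → α, IsIdempotentUninorm F ↔
      (IsIdempotentUninorm F ∧ IsAbsorbing F b) ∨ (IsIdempotentUninorm F ∧ IsAbsorbing F t) :=
    fun F => ⟨fun hF => (hF.isAbsorbing_bot_or_top hb ht).imp (⟨hF, ·⟩) (⟨hF, ·⟩),
      fun h => h.elim And.left And.left⟩
  rw [Nat.card_congr ((Equiv.subtypeEquivRight hsplit).trans (subtypeOrEquiv _ _ hdisj)),
    Nat.card_sum, Nat.card_congr (absorbingEquiv b (.inl hb)),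
    Nat.card_congr (absorbingEquiv t (.inr ht))]

end PartialOrder

theorem card_isIdempotentUninorm (α : Type*) [LinearOrder α] [Finite α] :
    Nat.card {F : α → α → α // IsIdempotentUninorm F} = 2 ^ (Nat.card α - 1) := by
  induction hk : Nat.card α using Nat.strong_induction_on generalizing α with
  | _ k ih =>
  rcases subsingleton_or_nontrivial α with hα | hα
  · have hk1 : k ≤ 1 := hk ▸ Finite.card_le_one_iff_subsingleton.mpr hα
    rw [Nat.sub_eq_zero_of_le hk1, pow_zero, Nat.card_eq_one_iff_unique]
    exact ⟨inferInstance, ⟨⟨_, isIdempotentUninorm_left_of_subsingleton⟩⟩⟩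
  obtain ⟨b, hb⟩ := Finite.exists_min (id : α → α)
  obtain ⟨t, ht⟩ := Finite.exists_max (id : α → α)
  have hk2 : 2 ≤ k := hk ▸ Finite.one_lt_card_iff_nontrivial.mpr hα
  have hbt : b ≠ t := by
    obtain ⟨x, y, hxy⟩ := exists_pair_ne α
    rintro rfl
    exact hxy (le_antisymm ((ht x).trans (hb y)) ((ht y).trans (hb x)))
  calc Nat.card {F : α → α → α // IsIdempotentUninorm F}
      _ = 2 ^ (k - 1 - 1) + 2 ^ (k - 1 - 1) := by
        rw [card_isIdempotentUninorm_eq_add hb ht hbt, ← hk]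
        congr 1 <;> exact ih _ (by omega) _ (Nat.card_subtype_ne _)
      _ = 2 ^ (k - 1) := by rw [← two_mul, ← pow_succ']; congr 1; omega

theorem stmt_11_general {n : ℕ} :
    Nat.card {F : Fin n → Fin n → Fin n //
      (∀ x y, F x y = x ∨ F x y = y) ∧ (∀ x y, F x y = F y x) ∧
      (∀ x x' y y', x ≤ x' → y ≤ y' → F x y ≤ F x' y')} = 2 ^ (n - 1) :=
  (card_isIdempotentUninorm (Fin n)).trans (by rw [Nat.card_fin])

theorem stmt_11 {n : ℕ} (hn : 1 ≤ n) :
    Nat.card {F : Fin n → Fin n → Fin n //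
      (∀ x y, F x y = x ∨ F x y = y) ∧ (∀ x y, F x y = F y x) ∧
      (∀ x x' y y', x ≤ x' → y ≤ y' → F x y ≤ F x' y')} = 2 ^ (n - 1) :=
  stmt_11_general
end

section
/- An operation F : Lₙ² → Lₙ is an idempotent discrete uninorm if and only if there exists a single-peaked linear ordering ⪯ on Lₙ such that F(x,y) is the maximum of x and y with respect to ⪯. -/
theorem stmt_12 {n : ℕ} (hn : 1 ≤ n) (F : Fin n → Fin n → Fin n) :
    ((∀ x, F x x = x) ∧ (∀ x y z, F (F x y) z = F x (F y z)) ∧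
      (∀ x y, F x y = F y x) ∧
      (∀ x x' y y', x ≤ x' → y ≤ y' → F x y ≤ F x' y') ∧
      (∃ e, ∀ x, F x e = x ∧ F e x = x)) ↔
    (∃ r : Fin n → Fin n → Prop, IsLinearOrder (Fin n) r ∧
      (∀ a b c : Fin n, a < b → b < c → (r b a ∧ b ≠ a) ∨ (r b c ∧ b ≠ c)) ∧
      (∀ x y, (r x y → F x y = y) ∧ (¬ r x y → F x y = x))) := by
  constructor
  · rintro ⟨hid, hassoc, hcomm, hmono, ⟨e, he⟩⟩
    -- F = min on the square below e
    have hmin : ∀ x y : Fin n, x ≤ e → y ≤ e → F x y = min x y := by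
      intro x y hx hy
      apply le_antisymm
      · rcases le_total x y with h | h
        · simpa [min_eq_left h, (he x).1] using hmono x x y e le_rfl hy
        · simpa [min_eq_right h, (he y).2] using hmono x e y y hx le_rfl
      · have := hmono (min x y) x (min x y) y (min_le_left x y) (min_le_right x y)
        simpa [hid] using this
    have hmax : ∀ x y : Fin n, e ≤ x → e ≤ y → F x y = max x y := by
      intro x y hx hy
      apply le_antisymm
      · have := hmono x (max x y) y (max x y) (le_max_left x y) (le_max_right x y)
        simpa [hid] using this
      · rcases le_total x y with h | h
        · simpa [max_eq_right h, (he y).2] using hmono e x y y hx le_rfl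
        · simpa [max_eq_left h, (he x).1] using hmono x x e y le_rfl hy
    -- internality
    have internal0 : ∀ x y : Fin n, x ≤ y → F x y = x ∨ F x y = y := by
      intro x y hxy
      rcases le_total x e with hxe | hxe
      · rcases le_total y e with hye | hye
        · left; rw [hmin x y hxe hye, min_eq_left hxy]
        · -- x ≤ e ≤ y
          set z := F x y with hz
          have hxz : x ≤ z := by
            have := hmono x x e y le_rfl hye
            simpa [(he x).1] using this
          have hzy : z ≤ y := by
            have := hmono x e y y hxe le_rfl
            simpa [(he y).2] using this
          have hzz : F x z = z := by
            rw [hz, ← hassoc, hid]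
          have hzz' : F z y = z := by
            rw [hz, hassoc, hid]
          rcases le_total z e with hze | hze
          · left
            have h' : F x z = min x z := hmin x z hxe hze
            rw [hzz, min_eq_left hxz] at h'
            exact h'
          · right
            have : F z y = max z y := hmax z y hze hye
            rw [hzz'] at this
            rw [this, max_eq_right hzy]
      · have hye : e ≤ y := le_trans hxe hxy
        right; rw [hmax x y hxe hye, max_eq_right hxy]
    have internal : ∀ x y : Fin n, F x y = x ∨ F x y = y := by
      intro x y
      rcases le_total x y with h | h
      · exact internal0 x y h
      · rcases internal0 y x h with h' | h'
        · right; rw [hcomm]; exact h'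
        · left; rw [hcomm]; exact h'
    refine ⟨fun x y => F x y = y, ?_, ?_, ?_⟩
    · exact
        { refl := fun x => hid x
          trans := fun x y z h1 h2 => by
            show F x z = z
            calc F x z = F x (F y z) := by rw [h2]
              _ = F (F x y) z := (hassoc x y z).symm
              _ = F y z := by rw [h1]
              _ = z := h2
          antisymm := fun x y h1 h2 => by
            show x = y
            calc x = F y x := h2.symm
              _ = F x y := hcomm y x
              _ = y := h1
          total := fun x y => by
            rcases internal x y with h | h
            · right; show F y x = x; rw [hcomm]; exact h
            · left; exact h }
    · intro a b c hab hbc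
      have hne1 : b ≠ a := ne_of_gt hab
      have hne2 : b ≠ c := ne_of_lt hbc
      by_cases h1 : F b a = a
      · exact Or.inl ⟨h1, hne1⟩
      · right
        refine ⟨?_, hne2⟩
        have hba : F b a = b := (internal b a).resolve_right h1
        rcases le_total b e with hbe | hbe
        · have := hmin b a hbe (le_trans (le_of_lt hab) hbe)
          rw [hba, min_eq_right (le_of_lt hab)] at this
          exact absurd this hne1
        · have := hmax b c hbe (le_trans hbe (le_of_lt hbc))
          show F b c = c
          rw [this, max_eq_right (le_of_lt hbc)]
    · intro x y
      exact ⟨fun h => h, fun h => (internal x y).resolve_right h⟩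
  · rintro ⟨r, hlin, hsp, hFr⟩
    have hrefl : ∀ x, r x x := hlin.refl
    have htrans : ∀ {x y z}, r x y → r y z → r x z := fun h1 h2 => hlin.trans _ _ _ h1 h2
    have hanti : ∀ {x y}, r x y → r y x → x = y := fun h1 h2 => hlin.antisymm _ _ h1 h2
    have htot : ∀ x y, r x y ∨ r y x := hlin.total
    have hcomm : ∀ x y, F x y = F y x := by
      intro x y
      by_cases h1 : r x y
      · by_cases h2 : r y x
        · have := hanti h1 h2; subst this; rfl
        · rw [(hFr x y).1 h1, (hFr y x).2 h2]
      · have h2 : r y x := (htot x y).resolve_left h1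
        rw [(hFr x y).2 h1, (hFr y x).1 h2]
    have hid : ∀ x, F x x = x := fun x => (hFr x x).1 (hrefl x)
    have hassoc : ∀ x y z, F (F x y) z = F x (F y z) := by
      intro x y z
      by_cases h1 : r x y
      · by_cases h2 : r y z
        · rw [(hFr x y).1 h1, (hFr y z).1 h2, (hFr x z).1 (htrans h1 h2)]
        · have h2' : r z y := (htot y z).resolve_left h2
          rw [(hFr x y).1 h1, (hFr y z).2 h2, (hFr x y).1 h1]
      · by_cases h2 : r y z
        · rw [(hFr x y).2 h1, (hFr y z).1 h2]
        · have h1' : r y x := (htot x y).resolve_left h1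
          have h2' : r z y := (htot y z).resolve_left h2
          have h3 : ¬ r x z := by
            intro h
            exact h1 (htrans h h2')
          rw [(hFr x y).2 h1, (hFr y z).2 h2, (hFr x z).2 h3, (hFr x y).2 h1]
    -- monotonicity in the left argument
    have hmonoL : ∀ x x' y : Fin n, x ≤ x' → F x y ≤ F x' y := by
      intro x x' y hxx'
      by_cases h1 : r x y
      · by_cases h2 : r x' y
        · rw [(hFr x y).1 h1, (hFr x' y).1 h2]
        · -- need y ≤ x'
          rw [(hFr x y).1 h1, (hFr x' y).2 h2]
          by_contra hcon
          push_neg at hcon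
          have hxne : x ≠ x' := by rintro rfl; exact h2 h1
          have hxlt : x < x' := lt_of_le_of_ne hxx' hxne
          have h3 : r y x' := (htot x' y).resolve_left h2
          rcases hsp x x' y hxlt hcon with ⟨h4, _⟩ | ⟨h4, _⟩
          · have : r y x := htrans h3 h4
            have : x = y := hanti h1 this
            omega
          · exact h2 h4
      · by_cases h2 : r x' y
        · -- need x ≤ y
          rw [(hFr x y).2 h1, (hFr x' y).1 h2]
          by_contra hcon
          push_neg at hcon
          have hxne : x ≠ x' := by rintro rfl; exact h1 h2
          have hxlt : x < x' := lt_of_le_of_ne hxx' hxne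
          rcases hsp y x x' hcon hxlt with ⟨h4, _⟩ | ⟨h4, _⟩
          · exact h1 h4
          · have h3 : r y x := (htot x y).resolve_left h1
            have : x' = x := hanti (htrans h2 h3) h4
            omega
        · rw [(hFr x y).2 h1, (hFr x' y).2 h2]
          exact hxx'
    have hmono : ∀ x x' y y' : Fin n, x ≤ x' → y ≤ y' → F x y ≤ F x' y' := by
      intro x x' y y' h1 h2
      calc F x y ≤ F x' y := hmonoL x x' y h1
        _ = F y x' := hcomm x' y
        _ ≤ F y' x' := hmonoL y y' x' h2
        _ = F x' y' := hcomm y' x'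
    -- neutral element: the r-minimum
    have hminex : ∀ (l : List (Fin n)) (a : Fin n), ∃ m : Fin n, r m a ∧ ∀ x ∈ l, r m x := by
      intro l
      induction l with
      | nil => intro a; exact ⟨a, hrefl a, by simp⟩
      | cons b t ih =>
        intro a
        obtain ⟨m, hma, hmt⟩ := ih a
        by_cases h : r m b
        · refine ⟨m, hma, ?_⟩
          intro x hx
          rcases List.mem_cons.mp hx with h' | h'
          · subst h'; exact h
          · exact hmt x h'
        · have hbm : r b m := (htot m b).resolve_left h
          refine ⟨b, htrans hbm hma, ?_⟩
          intro x hx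
          rcases List.mem_cons.mp hx with h' | h'
          · subst h'; exact hrefl _
          · exact htrans hbm (hmt x h')
    obtain ⟨m, _, hm⟩ := hminex (List.finRange n) ⟨0, hn⟩
    have hmx : ∀ x : Fin n, r m x := fun x => hm x (List.mem_finRange x)
    refine ⟨hid, hassoc, hcomm, hmono, ⟨m, ?_⟩⟩
    intro x
    have h1 : F m x = x := (hFr m x).1 (hmx x)
    exact ⟨by rw [hcomm]; exact h1, h1⟩
end

section
/- For any single-peaked linear ordering ⪯ on a finite chain Lₙ, the operation F(x,y) = max_⪯(x,y) is nondecreasing with respect to the natural order ≤. -/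
/-!
It suffices to treat each argument of `F = max_⪯` separately. If raising `x` to `x'` turned
`F x y = y` into `F x' y = x'` with `x' < y`, then `x < x' < y`, so single-peakedness puts `x'`
below `x` or below `y` in `⪯`; either way `x' ⪯ y`, a contradiction. The other cases are alike,
using only transitivity and antisymmetry of `⪯`.
-/

variable {α : Type*} [LinearOrder α]

/-- Only the weak form `b ⪯ a ∨ b ⪯ c` is needed: for an antisymmetric `r` and `a < b < c` it
is equivalent to the strict one. -/
def IsSinglePeaked (r : α → α → Prop) : Prop :=
  ∀ ⦃a b c : α⦄, a < b → b < c → r b a ∨ r b c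

def IsMaxBy (r : α → α → Prop) (F : α → α → α) : Prop :=
  ∀ x y, (r x y → F x y = y) ∧ (¬ r x y → F x y = x)

namespace IsSinglePeaked

variable {r : α → α → Prop} {F : α → α → α}

theorem mono_left [IsTrans α r] (hsp : IsSinglePeaked r) (hF : IsMaxBy r F)
    {x x' : α} (y : α) (hx : x ≤ x') : F x y ≤ F x' y := by
  by_cases h : r x y <;> by_cases h' : r x' y
  · rw [(hF x y).1 h, (hF x' y).1 h']
  · rw [(hF x y).1 h, (hF x' y).2 h']
    by_contra! hlt
    have hxx' : x < x' := hx.lt_of_ne (by rintro rfl; exact h' h)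
    rcases hsp hxx' hlt with hr | hr
    · exact h' (_root_.trans hr h)
    · exact h' hr
  · rw [(hF x y).2 h, (hF x' y).1 h']
    by_contra! hlt
    have hxx' : x < x' := hx.lt_of_ne (by rintro rfl; exact h h')
    rcases hsp hlt hxx' with hr | hr
    · exact h hr
    · exact h (_root_.trans hr h')
  · rwa [(hF x y).2 h, (hF x' y).2 h']

theorem mono_right [IsTrans α r] [Std.Antisymm r] (hsp : IsSinglePeaked r) (hF : IsMaxBy r F)
    (x : α) {y y' : α} (hy : y ≤ y') : F x y ≤ F x y' := by
  by_cases h : r x y <;> by_cases h' : r x y'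
  · rwa [(hF x y).1 h, (hF x y').1 h']
  · rw [(hF x y).1 h, (hF x y').2 h']
    by_contra! hlt
    have hyy' : y < y' := hy.lt_of_ne (by rintro rfl; exact h' h)
    rcases hsp hlt hyy' with hr | hr
    · exact hlt.ne (antisymm h hr)
    · exact h' (_root_.trans h hr)
  · rw [(hF x y).2 h, (hF x y').1 h']
    by_contra! hlt
    have hyy' : y < y' := hy.lt_of_ne (by rintro rfl; exact h h')
    rcases hsp hyy' hlt with hr | hr
    · exact h (_root_.trans h' hr)
    · exact hlt.ne (antisymm hr h')
  · rw [(hF x y).2 h, (hF x y').2 h']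

theorem mono [IsTrans α r] [Std.Antisymm r] (hsp : IsSinglePeaked r) (hF : IsMaxBy r F)
    {x x' y y' : α} (hx : x ≤ x') (hy : y ≤ y') : F x y ≤ F x' y' :=
  (hsp.mono_left hF y hx).trans (hsp.mono_right hF x' hy)

end IsSinglePeaked

theorem stmt_13 {n : ℕ} (r : Fin n → Fin n → Prop)
    (hlin : IsLinearOrder (Fin n) r)
    (hsp : ∀ a b c : Fin n, a < b → b < c → (r b a ∧ b ≠ a) ∨ (r b c ∧ b ≠ c))
    (F : Fin n → Fin n → Fin n)
    (hF : ∀ x y, (r x y → F x y = y) ∧ (¬ r x y → F x y = x)) :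
    ∀ x x' y y', x ≤ x' → y ≤ y' → F x y ≤ F x' y' := by
  have hsp' : IsSinglePeaked r := fun a b c hab hbc => (hsp a b c hab hbc).imp And.left And.left
  exact fun _ _ _ _ hx hy => hsp'.mono hF hx hy
end

section
/- A conservative operation F : X² → X is not associative if and only if there exist pairwise distinct a,b,c ∈ X such that F(a,b), F(a,c), F(b,c) are pairwise distinct. -/
theorem stmt_15 {X : Type*} (F : X → X → X)
    (hcons : ∀ x y : X, F x y = x ∨ F x y = y) :
    (¬ ∀ x y z : X, F (F x y) z = F x (F y z)) ↔
      (∃ a b c : X, a ≠ b ∧ a ≠ c ∧ b ≠ c ∧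
        F a b ≠ F a c ∧ F a b ≠ F b c ∧ F a c ≠ F b c) := by
  have hid : ∀ w : X, F w w = w := fun w => (hcons w w).elim id id
  constructor
  · intro hna
    by_contra hne
    push_neg at hne
    apply hna
    intro x y z
    by_cases hxy : x = y
    · subst hxy
      rcases hcons x z with h' | h' <;> simp [hid, h']
    by_cases hyz : y = z
    · subst hyz
      rcases hcons x y with h' | h' <;> simp [hid, h']
    by_cases hxz : x = z
    · subst hxz
      rcases hcons x y with h | h <;> rcases hcons y x with h' | h' <;>
        simp [hid, h, h']
    -- x, y, z pairwise distinct
    have key := hne x y z hxy hxz hyz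
    rcases hcons x y with h1 | h1 <;> rcases hcons y z with h2 | h2
    · -- F x y = x, F y z = y : need F x z = x
      rcases hcons x z with h3 | h3
      · simp [h1, h2, h3]
      · exfalso
        have c1 : F x y ≠ F x z := by rw [h1, h3]; exact hxz
        have c2 : F x y ≠ F y z := by rw [h1, h2]; exact hxy
        have := key c1 c2
        rw [h3, h2] at this
        exact hyz this.symm
    · simp [h1, h2]
    · simp [h1, h2]
    · -- F x y = y, F y z = z : need F x z = z
      rcases hcons x z with h3 | h3
      · exfalso
        have c1 : F x y ≠ F x z := by rw [h1, h3]; exact fun e => hxy e.symm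
        have c2 : F x y ≠ F y z := by rw [h1, h2]; exact hyz
        have := key c1 c2
        rw [h3, h2] at this
        exact hxz this
      · simp [h1, h2, h3]
  · rintro ⟨a, b, c, hab, hac, hbc, h1, h2, h3⟩ hassoc
    rcases hcons a b with e1 | e1
    · have e2 : F a c = c := by
        rcases hcons a c with e | e
        · exact absurd (e1.trans e.symm) h1
        · exact e
      have e3 : F b c = b := by
        rcases hcons b c with e | e
        · exact e
        · exact absurd (e2.trans e.symm) h3
      have := hassoc a b c
      rw [e1, e3, e2, e1] at this
      exact h1 (by rw [e1, e2]; exact this.symm)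
    · have e3 : F b c = c := by
        rcases hcons b c with e | e
        · exact absurd (e1.trans e.symm) h2
        · exact e
      have e2 : F a c = a := by
        rcases hcons a c with e | e
        · exact e
        · exact absurd (e.trans e3.symm) h3
      have := hassoc a b c
      rw [e1, e3, e2] at this
      exact hac this.symm
end

section
/- If an operation F : X² → X is bisymmetric and conservative, then F is associative. -/
theorem stmt_18 {X : Type*} (F : X → X → X)
    (hbis : ∀ x y u v : X, F (F x y) (F u v) = F (F x u) (F y v))
    (hcons : ∀ x y : X, F x y = x ∨ F x y = y) :
    ∀ x y z : X, F (F x y) z = F x (F y z) := by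
  have idem : ∀ x : X, F x x = x := fun x => by rcases hcons x x with h | h <;> exact h
  intro x y z
  have h1 := hbis x y z z
  have h2 := hbis x x y z
  have h3 := hbis x y z x
  have h4 := hbis x y y z
  have h5 := hbis x z y x
  have h6 := hbis y x z y
  have h7 := hbis x z z y
  rcases hcons x y with a | a <;> rcases hcons y z with b | b <;>
    rcases hcons x z with c | c <;> rcases hcons y x with d | d <;>
    rcases hcons z y with e | e <;> rcases hcons z x with f | f <;>
    simp_all [idem]
end

section
/- An operation F : Lₙ² → Lₙ is bisymmetric, nondecreasing, and has a neutral element if and only if it is a discrete uninorm (associative, symmetric, nondecreasing, with a neutral element). -/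
theorem stmt_19 {n : ℕ} (F : Fin n → Fin n → Fin n) :
    ((∀ x y u v, F (F x y) (F u v) = F (F x u) (F y v)) ∧
      (∀ x x' y y', x ≤ x' → y ≤ y' → F x y ≤ F x' y') ∧
      (∃ e, ∀ x, F x e = x ∧ F e x = x)) ↔
    ((∀ x y z, F (F x y) z = F x (F y z)) ∧ (∀ x y, F x y = F y x) ∧
      (∀ x x' y y', x ≤ x' → y ≤ y' → F x y ≤ F x' y') ∧
      (∃ e, ∀ x, F x e = x ∧ F e x = x)) := by
  constructor
  · rintro ⟨hb, hm, e, he⟩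
    refine ⟨?_, ?_, hm, ⟨e, he⟩⟩
    · intro x y z
      have := hb x y e z
      simpa [(he _).1, (he _).2] using this
    · intro x y
      have := hb e x y e
      simpa [(he _).1, (he _).2] using this
  · rintro ⟨ha, hc, hm, e, he⟩
    refine ⟨?_, hm, ⟨e, he⟩⟩
    intro x y u v
    rw [ha, ha, ← ha y u v, hc y u, ha u y v]
end
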